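/- arXiv:2406.11360 — 3 statements merged into one kernel-verified Lean document; each statement's English description precedes it below -/
import Mathlib

section
/- For every prime p and every integer k with p not dividing k, there exists a natural number m with p not dividing m such that cos²(2πkm/p) = cos²(2π/p). Consequently, if p ≥ 11, then the 2-state QFA M_k accepts a non-member a^m of MOD_p with probability greater than 1/2, so M_k does not recognize MOD_p with bounded error. -/
/-- For every prime `p` and integer `k` with `p ∤ k`, there is a natural number `m`
with `p ∤ m` such that `cos²(2πkm/p) = cos²(2π/p)`; moreover if `p ≥ 11` this
acceptance probability exceeds `1/2`, so, for `p ≥ 11`, the 2-state QFA `M_k`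
(which accepts `a^m` with probability `cos²(2kmπ/p)`) does not recognize `MOD_p`
with bounded error: there is no `ε ∈ [0, 1/2)` such that every member is accepted
with probability at least `1 − ε` and every non-member with probability at most `ε`. -/
theorem qfa_two_state_no_bounded_error (p : ℕ) (hp : p.Prime) (k : ℤ)
    (hk : ¬ (p : ℤ) ∣ k) :
    (∃ m : ℕ, ¬ (p : ℤ) ∣ (m : ℤ) ∧
      Real.cos (2 * Real.pi * k * m / p) ^ 2 = Real.cos (2 * Real.pi / p) ^ 2 ∧
      (11 ≤ p → 1 / 2 < Real.cos (2 * Real.pi * k * m / p) ^ 2)) ∧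
    (11 ≤ p → ¬ ∃ ε : ℝ, 0 ≤ ε ∧ ε < 1 / 2 ∧
      ∀ m : ℕ,
        (p ∣ m → 1 - ε ≤ Real.cos (2 * Real.pi * k * m / p) ^ 2) ∧
        (¬ p ∣ m → Real.cos (2 * Real.pi * k * m / p) ^ 2 ≤ ε)) := by
  haveI := Fact.mk hp
  have hk0 : (k : ZMod p) ≠ 0 := by
    rwa [Ne, ZMod.intCast_zmod_eq_zero_iff_dvd]
  set u : ZMod p := (k : ZMod p)⁻¹ with hu
  have hku : (k : ZMod p) * u = 1 := mul_inv_cancel₀ hk0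
  set m := u.val with hm
  have hmval : ((m : ℕ) : ZMod p) = u := by
    have h := ZMod.natCast_val (R := ZMod p) u
    rwa [ZMod.cast_id] at h
  have hu0 : u ≠ 0 := by
    intro h; rw [h, mul_zero] at hku; exact zero_ne_one hku
  have hpm : ¬ p ∣ m := by
    intro h
    exact hu0 (hmval ▸ (ZMod.natCast_eq_zero_iff m p).mpr h)
  have hpmz : ¬ (p : ℤ) ∣ (m : ℤ) := by rwa [Int.natCast_dvd_natCast]
  -- k * m ≡ 1 mod p
  have hdvd : (p : ℤ) ∣ k * (m : ℤ) - 1 := by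
    rw [← ZMod.intCast_zmod_eq_zero_iff_dvd]
    push_cast
    rw [hmval, hku]
    ring
  obtain ⟨t, ht⟩ := hdvd
  have hkm : (k : ℝ) * (m : ℝ) = 1 + (p : ℝ) * t := by
    have : (k * (m : ℤ) : ℤ) = 1 + (p : ℤ) * t := by linarith
    exact_mod_cast congrArg (Int.cast : ℤ → ℝ) this
  have hp0 : (p : ℝ) ≠ 0 := Nat.cast_ne_zero.mpr hp.pos.ne'
  have hang : 2 * Real.pi * k * m / p = 2 * Real.pi / p + t * (2 * Real.pi) := by
    field_simp
    nlinarith [hkm, Real.pi_pos]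
  have hcos : Real.cos (2 * Real.pi * k * m / p) = Real.cos (2 * Real.pi / p) := by
    rw [hang, Real.cos_add_int_mul_two_pi]
  have hbig : 11 ≤ p → 1 / 2 < Real.cos (2 * Real.pi * k * m / p) ^ 2 := by
    intro hp11
    rw [hcos]
    have hp11' : (11 : ℝ) ≤ p := by exact_mod_cast hp11
    have hlt : 2 * Real.pi / p < Real.pi / 4 := by
      rw [div_lt_div_iff₀ (by positivity) (by norm_num)]
      nlinarith [Real.pi_pos]
    have hmono : Real.cos (Real.pi / 4) < Real.cos (2 * Real.pi / p) :=
      Real.cos_lt_cos_of_nonneg_of_le_pi (by positivity)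
        (by nlinarith [Real.pi_pos]) hlt
    rw [Real.cos_pi_div_four] at hmono
    have h2 : (0:ℝ) ≤ Real.sqrt 2 / 2 := by positivity
    nlinarith [Real.sq_sqrt (by norm_num : (2:ℝ) ≥ 0), hmono, h2]
  refine ⟨⟨m, hpmz, by rw [hcos], hbig⟩, ?_⟩
  rintro hp11 ⟨ε, hε0, hεhalf, hall⟩
  have h1 := (hall m).2 hpm
  have h2 := hbig hp11
  linarith
end

section
/- Let p be a prime, d ≥ 1 a natural number, k_1, …, k_d integers, and m a natural number. Let U_a be the (2d)×(2d) complex block-diagonal matrix over the index type Fin d × Fin 2 whose i-th 2×2 diagonal block is R_y(2πk_i/p), and let v = (1/√d) · Σ_{i ∈ Fin d} e_{(i,0)} (the uniform superposition over the blocks with target component e_0; this is the state produced by applying Hadamard gates to the control qubits of the all-zero state). Then the inner product ⟨v, U_a^m v⟩ equals (1/d) · Σ_{i=1}^{d} cos(2πk_i m/p). In particular, if p divides m this amplitude equals 1, so the QFA M_K accepts every member of MOD_p with probability 1, and in general M_K accepts a^m with probability ((1/d) · Σ_{i=1}^{d} cos(2πk_i m/p))². -/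
open Matrix

/-- `R_y(θ)`: the 2×2 rotation matrix `[[cos θ, −sin θ], [sin θ, cos θ]]` viewed over `ℂ`. -/
noncomputable def Ry (θ : ℝ) : Matrix (Fin 2) (Fin 2) ℂ :=
  !![(Real.cos θ : ℂ), -(Real.sin θ : ℂ); (Real.sin θ : ℂ), (Real.cos θ : ℂ)]

/-- Block-diagonal matrix over the index type `Fin d × Fin 2` whose `i`-th
2×2 diagonal block is `A i`. -/
def bdiag (d : ℕ) (A : Fin d → Matrix (Fin 2) (Fin 2) ℂ) :
    Matrix (Fin d × Fin 2) (Fin d × Fin 2) ℂ :=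
  Matrix.of fun x y => if x.1 = y.1 then A x.1 x.2 y.2 else 0

/-! The amplitude of `v` in `U_a^m v` is the average of the `(0,0)` entries of the blocks of
`U_a^m = bdiag (R_y(2πk_i m/p))`, i.e. of the cosines `cos(2πk_i m/p)`; each of them is `1`
when `p ∣ m` because the angle is then an integer multiple of `2π`. -/

lemma Ry_zero : Ry 0 = 1 := by
  ext i j
  fin_cases i <;> fin_cases j <;> simp [Ry]

lemma Ry_mul (θ φ : ℝ) : Ry θ * Ry φ = Ry (θ + φ) := by
  ext i j
  fin_cases i <;> fin_cases j <;>
    simp [Ry, Matrix.mul_apply, Real.cos_add, Real.sin_add] <;> ring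

lemma Ry_pow (θ : ℝ) (m : ℕ) : Ry θ ^ m = Ry (m * θ) := by
  induction m with
  | zero => simp [Ry_zero]
  | succ n ih => rw [pow_succ, ih, Ry_mul]; congr 1; push_cast; ring

lemma Ry_apply_zero_zero (θ : ℝ) : Ry θ 0 0 = Real.cos θ := rfl

lemma bdiag_one (d : ℕ) : bdiag d (fun _ => 1) = 1 := by
  ext x y
  by_cases h : x.1 = y.1 <;> simp [bdiag, Matrix.one_apply, Prod.ext_iff, h]

lemma bdiag_mul (d : ℕ) (A B : Fin d → Matrix (Fin 2) (Fin 2) ℂ) :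
    bdiag d A * bdiag d B = bdiag d (fun i => A i * B i) := by
  ext x y
  simp only [bdiag, Matrix.mul_apply, Matrix.of_apply, Fintype.sum_prod_type]
  rw [Finset.sum_eq_single x.1]
  · by_cases h : x.1 = y.1 <;> simp [h]
  · intro b _ hb; simp [Ne.symm hb]
  · simp

lemma bdiag_pow (d : ℕ) (A : Fin d → Matrix (Fin 2) (Fin 2) ℂ) (m : ℕ) :
    bdiag d A ^ m = bdiag d (fun i => A i ^ m) := by
  induction m with
  | zero => simp [bdiag_one]
  | succ n ih => simp only [pow_succ, ih, bdiag_mul]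

lemma star_dotProduct_bdiag_mulVec (d : ℕ) (A : Fin d → Matrix (Fin 2) (Fin 2) ℂ) (c : ℂ) :
    let v : Fin d × Fin 2 → ℂ := fun x => if x.2 = 0 then c else 0
    star v ⬝ᵥ (bdiag d A *ᵥ v) = star c * c * ∑ i, A i 0 0 := by
  intro v
  simp only [v, bdiag, dotProduct, mulVec, Fintype.sum_prod_type, Fin.sum_univ_two]
  simp [Finset.mul_sum, mul_assoc, mul_comm c]

lemma cos_two_pi_mul_div_eq_one_of_dvd (k : ℤ) {p m : ℕ} (h : p ∣ m) :
    Real.cos (2 * Real.pi * k * m / p) = 1 := by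
  obtain ⟨t, rfl⟩ := h
  rcases eq_or_ne p 0 with rfl | hp
  · simp -- `0 ∣ m` forces `m = 0`, and the angle is `0` (`x / 0 = 0` in `ℝ`)
  · have : 2 * Real.pi * k * ↑(p * t) / p = ((k * t : ℤ) : ℝ) * (2 * Real.pi) := by
      push_cast; field_simp
    rw [this, Real.cos_int_mul_two_pi]

theorem qfa_parallel_acceptance_general (p : ℕ) (d : ℕ) (hd : 1 ≤ d)
    (k : Fin d → ℤ) (m : ℕ) :
    let Ua : Matrix (Fin d × Fin 2) (Fin d × Fin 2) ℂ :=
      bdiag d fun i => Ry (2 * Real.pi * (k i) / p)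
    let v : Fin d × Fin 2 → ℂ := fun x => if x.2 = 0 then ((1 / Real.sqrt d : ℝ) : ℂ) else 0
    dotProduct (star v) ((Ua ^ m).mulVec v)
        = (((1 / (d : ℝ)) * ∑ i : Fin d, Real.cos (2 * Real.pi * (k i) * m / p) : ℝ) : ℂ) ∧
    ((p ∣ m) → dotProduct (star v) ((Ua ^ m).mulVec v) = 1) ∧
    ‖dotProduct (star v) ((Ua ^ m).mulVec v)‖ ^ 2
        = ((1 / (d : ℝ)) * ∑ i : Fin d, Real.cos (2 * Real.pi * (k i) * m / p)) ^ 2 := by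
  intro Ua v
  have amplitude : star v ⬝ᵥ (Ua ^ m *ᵥ v)
      = (((1 / (d : ℝ)) * ∑ i : Fin d, Real.cos (2 * Real.pi * (k i) * m / p) : ℝ) : ℂ) := by
    have hnorm : ((1 / Real.sqrt d : ℝ) : ℂ) * ((1 / Real.sqrt d : ℝ) : ℂ) = ((1 / d : ℝ) : ℂ) := by
      rw [← Complex.ofReal_mul, div_mul_div_comm, one_mul, Real.mul_self_sqrt d.cast_nonneg]
    have angle (i : Fin d) : (m : ℝ) * (2 * Real.pi * k i / p) = 2 * Real.pi * k i * m / p := by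
      ring
    simp only [Ua, v, bdiag_pow, Ry_pow, angle, star_dotProduct_bdiag_mulVec, Ry_apply_zero_zero,
      Complex.star_def, Complex.conj_ofReal, hnorm, Complex.ofReal_mul, Complex.ofReal_sum]
  refine ⟨amplitude, fun hpm => ?_, ?_⟩
  · have hd0 : (d : ℝ) ≠ 0 := by positivity
    simp [amplitude, cos_two_pi_mul_div_eq_one_of_dvd _ hpm, hd0]
  · rw [amplitude, Complex.norm_real, Real.norm_eq_abs, sq_abs]

/-- Let `U_a` be the block-diagonal matrix with blocks `R_y(2πk_i/p)` and let
`v = (1/√d)·Σ_i e_{(i,0)}` be the uniform superposition over the blocks with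
target component `e₀`.  Then `⟨v, U_a^m v⟩ = (1/d)·Σ_i cos(2πk_i m/p)`;
in particular this amplitude is `1` when `p ∣ m`, and the QFA `M_K` accepts
`a^m` with probability `((1/d)·Σ_i cos(2πk_i m/p))²`. -/
theorem qfa_parallel_acceptance (p : ℕ) (hp : p.Prime) (d : ℕ) (hd : 1 ≤ d)
    (k : Fin d → ℤ) (m : ℕ) :
    let Ua : Matrix (Fin d × Fin 2) (Fin d × Fin 2) ℂ :=
      bdiag d fun i => Ry (2 * Real.pi * (k i) / p)
    let v : Fin d × Fin 2 → ℂ := fun x => if x.2 = 0 then ((1 / Real.sqrt d : ℝ) : ℂ) else 0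
    dotProduct (star v) ((Ua ^ m).mulVec v)
        = (((1 / (d : ℝ)) * ∑ i : Fin d, Real.cos (2 * Real.pi * (k i) * m / p) : ℝ) : ℂ) ∧
    ((p ∣ m) → dotProduct (star v) ((Ua ^ m).mulVec v) = 1) ∧
    ‖dotProduct (star v) ((Ua ^ m).mulVec v)‖ ^ 2
        = ((1 / (d : ℝ)) * ∑ i : Fin d, Real.cos (2 * Real.pi * (k i) * m / p)) ^ 2 :=
  qfa_parallel_acceptance_general p d hd k m
end

section
/- (Recursive step of the Möttönen et al. decomposition of a uniformly controlled rotation.) Let d' ≥ 1 and let α : Fin 2 × Fin d' → ℝ. For β : Fin 2 × Fin d' → ℝ, let D(β) denote the block-diagonal matrix over the index type (Fin 2 × Fin d') × Fin 2 whose ((c,i))-th 2×2 diagonal block is R_y(β(c,i)), and let CX denote the matrix over the same index type that maps the basis vector e_{((c,i),b)} to e_{((c,i), b ⊕ c)} (a NOT on the last (target) qubit controlled by the first qubit). Define θ'(c,i) = (α(0,i) + α(1,i))/2 and θ''(c,i) = (α(0,i) − α(1,i))/2 (both independent of c). Then D(α) = CX · D(θ'') · CX · D(θ'). -/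
open Matrix

/-- Uniformly controlled rotation: the block-diagonal matrix over the index type
`(Fin 2 × Fin d') × Fin 2` whose `(c,i)`-th 2×2 diagonal block is `R_y(β (c,i))`. -/
noncomputable def D (d' : ℕ) (β : Fin 2 × Fin d' → ℝ) :
    Matrix ((Fin 2 × Fin d') × Fin 2) ((Fin 2 × Fin d') × Fin 2) ℂ :=
  Matrix.of fun x y => if x.1 = y.1 then Ry (β x.1) x.2 y.2 else 0

/-- The CNOT on the target qubit controlled by the first qubit: the matrix mapping
the basis vector `e_{((c,i),b)}` to `e_{((c,i), b ⊕ c)}`. -/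
def CXgate (d' : ℕ) :
    Matrix ((Fin 2 × Fin d') × Fin 2) ((Fin 2 × Fin d') × Fin 2) ℂ :=
  Matrix.of fun y x => if y = (x.1, x.2 + x.1.1) then 1 else 0

lemma fin2_add_add (b c : Fin 2) : b + c + c = b := by fin_omega

lemma CX_mul (d' : ℕ) (M : Matrix ((Fin 2 × Fin d') × Fin 2) ((Fin 2 × Fin d') × Fin 2) ℂ) :
    CXgate d' * M = Matrix.of fun x y => M (x.1, x.2 + x.1.1) y := by
  ext x y
  simp only [Matrix.mul_apply, CXgate, Matrix.of_apply]
  rw [Finset.sum_eq_single (x.1, x.2 + x.1.1)]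
  · simp [fin2_add_add]
  · intro j _ hj
    rw [if_neg, zero_mul]
    intro h
    apply hj
    rw [h]
    simp [fin2_add_add]
  · simp

lemma keyc0 (a b : ℂ) : Complex.cos a =
    Complex.cos ((a-b)/2) * Complex.cos ((a+b)/2) - Complex.sin ((a-b)/2) * Complex.sin ((a+b)/2) := by
  have h := Complex.cos_add ((a-b)/2) ((a+b)/2)
  rw [show (a-b)/2 + (a+b)/2 = a by ring] at h
  linear_combination h

lemma keys0 (a b : ℂ) : Complex.sin a =
    Complex.sin ((a-b)/2) * Complex.cos ((a+b)/2) + Complex.cos ((a-b)/2) * Complex.sin ((a+b)/2) := by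
  have h := Complex.sin_add ((a-b)/2) ((a+b)/2)
  rw [show (a-b)/2 + (a+b)/2 = a by ring] at h
  linear_combination h

lemma keyc1 (a b : ℂ) : Complex.cos b =
    Complex.cos ((a+b)/2) * Complex.cos ((a-b)/2) + Complex.sin ((a+b)/2) * Complex.sin ((a-b)/2) := by
  have h := Complex.cos_sub ((a+b)/2) ((a-b)/2)
  rw [show (a+b)/2 - (a-b)/2 = b by ring] at h
  linear_combination h

lemma keys1 (a b : ℂ) : Complex.sin b =
    Complex.sin ((a+b)/2) * Complex.cos ((a-b)/2) - Complex.cos ((a+b)/2) * Complex.sin ((a-b)/2) := by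
  have h := Complex.sin_sub ((a+b)/2) ((a-b)/2)
  rw [show (a+b)/2 - (a-b)/2 = b by ring] at h
  linear_combination h

/-- Recursive step of the Möttönen et al. decomposition of a uniformly controlled
rotation: with `θ'(c,i) = (α(0,i)+α(1,i))/2` and `θ''(c,i) = (α(0,i)−α(1,i))/2`,
`D(α) = CX · D(θ'') · CX · D(θ')` (the rightmost factor is applied first). -/
theorem mottonen_recursive_step (d' : ℕ) (hd : 1 ≤ d') (α : Fin 2 × Fin d' → ℝ) :
    D d' α =
      CXgate d' *
        D d' (fun ci => (α (0, ci.2) - α (1, ci.2)) / 2) *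
      CXgate d' *
        D d' (fun ci => (α (0, ci.2) + α (1, ci.2)) / 2) := by
  rw [mul_assoc, mul_assoc, CX_mul]
  ext x y
  simp only [D, Matrix.of_apply, Matrix.mul_apply, CX_mul]
  rw [Fintype.sum_prod_type]
  rw [Finset.sum_eq_single x.1]
  · by_cases h : x.1 = y.1
    · rw [← h]
      simp only [if_pos rfl]
      obtain ⟨⟨c, i⟩, b⟩ := x
      obtain ⟨cy, b'⟩ := y
      simp only [Fin.sum_univ_two]
      fin_cases c <;> fin_cases b <;> fin_cases b' <;>
        simp [Ry] <;>
        first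
          | linear_combination keyc0 (α (0,i) : ℂ) (α (1,i) : ℂ)
          | linear_combination keys0 (α (0,i) : ℂ) (α (1,i) : ℂ)
          | linear_combination keyc1 (α (0,i) : ℂ) (α (1,i) : ℂ)
          | linear_combination keys1 (α (0,i) : ℂ) (α (1,i) : ℂ)
          | linear_combination -keyc0 (α (0,i) : ℂ) (α (1,i) : ℂ)
          | linear_combination -keys0 (α (0,i) : ℂ) (α (1,i) : ℂ)
          | linear_combination -keyc1 (α (0,i) : ℂ) (α (1,i) : ℂ)
          | linear_combination -keys1 (α (0,i) : ℂ) (α (1,i) : ℂ)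
    · simp [h]
  · intro j _ hj
    simp [Ne.symm hj]
  · simp
end
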